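/- Benjamini–Hochberg FDR control under independence: let p₁, …, pₘ be p-values where the p-values corresponding to true null hypotheses are i.i.d. uniform on [0,1] and independent of the others. Let the BH procedure at level α reject hypothesis i if pᵢ ≤ (k*/m)·α where k* = max{k : p₍ₖ₎ ≤ (k/m)α} (with p₍ₖ₎ the order statistics). Then the expected false discovery proportion E[V / max(R,1)] ≤ (m₀/m)·α ≤ α, where V is the number of rejected true nulls, R the total number of rejections, and m₀ the number of true nulls. -/

import Mathlib

/-!
Write `Kᵢ` for the BH cutoff computed after replacing `pᵢ` by `0`. Lowering `pᵢ` can only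
raise the cutoff, and it leaves the cutoff unchanged when `i` is rejected; hence `i` is
rejected iff `pᵢ ≤ Kᵢ α/m`, and in that case `R = Kᵢ`. So
`V / max(R,1) = ∑_{i ∈ H₀} 1{pᵢ ≤ Kᵢ α/m} / max(Kᵢ,1)`.
For a null `i`, `Kᵢ` is a function of the other p-values, hence independent of the uniform
`pᵢ`; conditionally on `Kᵢ = k` the `i`-th summand has mean at most
`(kα/m) / max(k,1) ≤ α/m`. Summing over the `m₀` nulls gives `m₀α/m`.
-/

open MeasureTheory ProbabilityTheory Finset

open scoped Classical in
/-- The BH cutoff index `k* = max{k ≤ m : at least k p-values are ≤ (k/m)·α}`,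
equivalently `max{k : p₍ₖ₎ ≤ (k/m)·α}` in terms of order statistics. -/
noncomputable def bhK {m : ℕ} (α : ℝ) (pv : Fin m → ℝ) : ℕ :=
  Nat.findGreatest
    (fun k => k ≤ (Finset.univ.filter (fun i => pv i ≤ (k : ℝ) / m * α)).card) m

open scoped Classical in
/-- The Benjamini–Hochberg rejection set at level `α`: reject `i` iff `pᵢ ≤ (k*/m)·α`. -/
noncomputable def bhRejects {m : ℕ} (α : ℝ) (pv : Fin m → ℝ) : Finset (Fin m) :=
  Finset.univ.filter (fun i => pv i ≤ (bhK α pv : ℝ) / m * α)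

/-- The heterogeneous family consisting of the null p-values individually together with the
vector of non-null p-values, used to express "nulls are mutually independent and independent
of the non-nulls". -/
def nullFam {Ω : Type*} {m : ℕ} (H0 : Finset (Fin m)) (p : Fin m → Ω → ℝ) :
    (j : {i // i ∈ H0} ⊕ Unit) →
      Ω → Sum.elim (fun _ : {i // i ∈ H0} => ℝ) (fun _ : Unit => {i : Fin m // i ∉ H0} → ℝ) j
  | Sum.inl i => p i.1
  | Sum.inr _ => fun ω i => p i.1 ω

def nullFamSpace {m : ℕ} (H0 : Finset (Fin m)) :
    (j : {i // i ∈ H0} ⊕ Unit) →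
      MeasurableSpace
        (Sum.elim (fun _ : {i // i ∈ H0} => ℝ) (fun _ : Unit => {i : Fin m // i ∉ H0} → ℝ) j)
  | Sum.inl _ => inferInstanceAs (MeasurableSpace ℝ)
  | Sum.inr _ => inferInstanceAs (MeasurableSpace ({i : Fin m // i ∉ H0} → ℝ))

section Deterministic

variable {m : ℕ} {α : ℝ} {pv : Fin m → ℝ}

theorem bhK_le : bhK α pv ≤ m := Nat.findGreatest_le m

theorem bhK_le_card_filter :
    bhK α pv ≤ (univ.filter fun i => pv i ≤ (bhK α pv : ℝ) / m * α).card :=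
  Nat.findGreatest_spec
    (P := fun k => k ≤ (univ.filter fun i => pv i ≤ (k : ℝ) / m * α).card)
    (Nat.zero_le m) (Nat.zero_le _)

theorem card_bhRejects (hα : 0 ≤ α) : (bhRejects α pv).card = bhK α pv := by
  refine le_antisymm (Nat.le_findGreatest ((card_filter_le _ _).trans_eq (card_fin m)) ?_)
    bhK_le_card_filter
  refine card_le_card fun i hi => ?_
  rw [bhRejects, mem_filter] at hi
  rw [mem_filter]
  exact ⟨mem_univ i, hi.2.trans (by gcongr; exact bhK_le_card_filter)⟩

theorem bhK_le_bhK_update_zero (hα : 0 ≤ α) (i : Fin m) :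
    bhK α pv ≤ bhK α (Function.update pv i 0) := by
  refine Nat.findGreatest_mono_left (fun k hk => hk.trans (card_le_card fun j hj => ?_)) m
  simp only [mem_filter, mem_univ, true_and] at hj ⊢
  rcases eq_or_ne j i with rfl | hji
  · rw [Function.update_self]; positivity
  · rwa [Function.update_of_ne hji]

theorem bhK_update_zero_eq (hα : 0 ≤ α) {i : Fin m}
    (hi : pv i ≤ (bhK α (Function.update pv i 0) : ℝ) / m * α) :
    bhK α (Function.update pv i 0) = bhK α pv := by
  refine le_antisymm (Nat.le_findGreatest bhK_le (bhK_le_card_filter.trans_eq ?_))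
    (bhK_le_bhK_update_zero hα i)
  refine congrArg card (filter_congr fun j _ => ?_)
  rcases eq_or_ne j i with rfl | hji
  · rw [Function.update_self]; exact iff_of_true (by positivity) hi
  · rw [Function.update_of_ne hji]

theorem mem_bhRejects_iff (hα : 0 ≤ α) {i : Fin m} :
    i ∈ bhRejects α pv ↔ pv i ≤ (bhK α (Function.update pv i 0) : ℝ) / m * α := by
  simp only [bhRejects, mem_filter, mem_univ, true_and]
  refine ⟨fun hi => hi.trans (by gcongr; exact bhK_le_bhK_update_zero hα i), fun hi => ?_⟩
  rwa [← bhK_update_zero_eq hα hi]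

/-- With `u = pᵢ`, `k = Kᵢ` and `c = α/m`, this is the share `1{i ∈ R} / max(R,1)` of
hypothesis `i` in the false discovery proportion. -/
noncomputable def fdpTerm (c u : ℝ) (k : ℕ) : ℝ :=
  if u ≤ c * k then 1 / max (k : ℝ) 1 else 0

theorem fdpTerm_bhK_update_zero (hα : 0 ≤ α) (i : Fin m) :
    fdpTerm (α / m) (pv i) (bhK α (Function.update pv i 0)) =
      if i ∈ bhRejects α pv then 1 / max ((bhRejects α pv).card : ℝ) 1 else 0 := by
  have hthr (k : ℕ) : α / m * k = (k : ℝ) / m * α := by ring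
  simp only [fdpTerm, hthr, ← mem_bhRejects_iff hα]
  split_ifs with hi
  · rw [card_bhRejects hα, bhK_update_zero_eq hα ((mem_bhRejects_iff hα).1 hi)]
  · rfl

theorem card_inter_bhRejects_div_eq_sum_fdpTerm (hα : 0 ≤ α) (s : Finset (Fin m)) :
    ((bhRejects α pv ∩ s).card : ℝ) / max ((bhRejects α pv).card : ℝ) 1 =
      ∑ i ∈ s, fdpTerm (α / m) (pv i) (bhK α (Function.update pv i 0)) := by
  simp only [fdpTerm_bhK_update_zero hα, inter_comm _ s, ← filter_mem_eq_inter, card_filter,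
    Nat.cast_sum, sum_div]
  refine sum_congr rfl fun i _ => ?_
  split_ifs <;> simp

end Deterministic

section Measurability

variable {m : ℕ}

theorem measurable_card_filter_le (t : ℝ) :
    Measurable fun pv : Fin m → ℝ => (univ.filter fun i => pv i ≤ t).card := by
  simp only [card_filter]
  exact Finset.measurable_sum _ fun i _ =>
    Measurable.ite (measurableSet_le (measurable_pi_apply i) measurable_const)
      measurable_const measurable_const

theorem measurable_bhK (α : ℝ) : Measurable fun pv : Fin m → ℝ => bhK α pv :=
  measurable_findGreatest fun _ _ => measurable_card_filter_le _ measurableSet_Ici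

end Measurability

section FdpTerm

variable {c u : ℝ} {k : ℕ}

theorem fdpTerm_nonneg : 0 ≤ fdpTerm c u k := by
  unfold fdpTerm; split_ifs <;> positivity

theorem fdpTerm_le_one : fdpTerm c u k ≤ 1 := by
  unfold fdpTerm
  split_ifs
  · exact div_le_one_of_le₀ (le_max_right _ _) (by positivity)
  · exact zero_le_one

theorem measurable_fdpTerm (c : ℝ) : Measurable fun z : ℝ × ℕ => fdpTerm c z.1 z.2 :=
  Measurable.ite (measurableSet_le measurable_fst (by fun_prop)) (by fun_prop) measurable_const

theorem integrable_fdpTerm {X : Type*} [MeasurableSpace X] {ν : Measure X} [IsFiniteMeasure ν]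
    {f : X → ℝ × ℕ} (hf : Measurable f) (c : ℝ) :
    Integrable (fun x => fdpTerm c (f x).1 (f x).2) ν :=
  .of_bound ((measurable_fdpTerm c).comp hf).aestronglyMeasurable 1 <| ae_of_all _ fun _ => by
    rw [Real.norm_of_nonneg fdpTerm_nonneg]; exact fdpTerm_le_one

theorem integral_fdpTerm_le {ν : Measure ℝ}
    (hν : ν (Set.Iic (c * k)) ≤ ENNReal.ofReal (c * k)) (hc : 0 ≤ c) :
    ∫ u, fdpTerm c u k ∂ν ≤ c := by
  have hind :
      (fun u => fdpTerm c u k) = (Set.Iic (c * k)).indicator fun _ => 1 / max (k : ℝ) 1 := by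
    ext u; simp [fdpTerm, Set.indicator_apply]
  rw [hind, integral_indicator_const _ measurableSet_Iic, smul_eq_mul, mul_one_div,
    div_le_iff₀ (by positivity)]
  calc ν.real (Set.Iic (c * k)) ≤ c * k := ENNReal.toReal_le_of_le_ofReal (by positivity) hν
    _ ≤ c * max (k : ℝ) 1 := mul_le_mul_of_nonneg_left (le_max_left _ _) hc

theorem integral_fdpTerm_le_of_indepFun {Ω : Type*} [MeasurableSpace Ω] {μ : Measure Ω}
    [IsProbabilityMeasure μ] {U : Ω → ℝ} {K : Ω → ℕ} (hU : Measurable U)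
    (hK : Measurable K) (hUK : IndepFun U K μ)
    (hsup : ∀ t, μ {ω | U ω ≤ t} ≤ ENNReal.ofReal t) (hc : 0 ≤ c) :
    ∫ ω, fdpTerm c (U ω) (K ω) ∂μ ≤ c := by
  have hinner (k : ℕ) : ∫ u, fdpTerm c u k ∂(μ.map U) ≤ c :=
    integral_fdpTerm_le (by rw [Measure.map_apply hU measurableSet_Iic]; exact hsup _) hc
  calc ∫ ω, fdpTerm c (U ω) (K ω) ∂μ
      = ∫ z, fdpTerm c z.1 z.2 ∂(μ.map fun ω => (U ω, K ω)) :=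
        (integral_map (hU.prodMk hK).aemeasurable
          (measurable_fdpTerm c).aestronglyMeasurable).symm
    _ = ∫ z, fdpTerm c z.1 z.2 ∂((μ.map U).prod (μ.map K)) := by
        rw [(indepFun_iff_map_prod_eq_prod_map_map hU.aemeasurable hK.aemeasurable).1 hUK]
    _ = ∫ k, ∫ u, fdpTerm c u k ∂(μ.map U) ∂(μ.map K) :=
        integral_prod_symm _ (integrable_fdpTerm measurable_id c)
    _ ≤ ∫ _k, c ∂(μ.map K) :=
        integral_mono_of_nonneg (ae_of_all _ fun _ => integral_nonneg fun _ => fdpTerm_nonneg)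
          (integrable_const c) (ae_of_all _ hinner)
    _ = c := by
        have := Measure.isProbabilityMeasure_map (μ := μ) hK.aemeasurable
        simp

end FdpTerm

theorem measure_le_le_ofReal_of_map_eq_uniform {Ω : Type*} [MeasurableSpace Ω] {μ : Measure Ω}
    {X : Ω → ℝ} (hX : Measurable X)
    (hlaw : μ.map X = (volume : Measure ℝ).restrict (Set.Icc 0 1)) (t : ℝ) :
    μ {ω | X ω ≤ t} ≤ ENNReal.ofReal t := by
  change μ (X ⁻¹' Set.Iic t) ≤ _
  rw [← Measure.map_apply hX measurableSet_Iic, hlaw, Measure.restrict_apply measurableSet_Iic]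
  calc volume (Set.Iic t ∩ Set.Icc 0 1) ≤ volume (Set.Icc 0 t) :=
        measure_mono fun x hx => ⟨hx.2.1, hx.1⟩
    _ = ENNReal.ofReal t := by rw [Real.volume_Icc, sub_zero]

section NullFamily

variable {m : ℕ} (H0 : Finset (Fin m)) (i : Fin m) (hi : i ∈ H0)

def nullFamIdxExcept : Finset ({x // x ∈ H0} ⊕ Unit) := {Sum.inl ⟨i, hi⟩}ᶜ

variable {H0 i hi}

theorem inl_mem_nullFamIdxExcept {j : Fin m} (hj : j ∈ H0) (hji : j ≠ i) :
    Sum.inl ⟨j, hj⟩ ∈ nullFamIdxExcept H0 i hi := by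
  simpa [nullFamIdxExcept] using hji

theorem inr_mem_nullFamIdxExcept : Sum.inr () ∈ nullFamIdxExcept H0 i hi := by
  simp [nullFamIdxExcept]

variable (H0 i hi)

noncomputable def updateZeroOfNullFamExcept
    (g : ∀ x : nullFamIdxExcept H0 i hi,
      Sum.elim (fun _ : {x // x ∈ H0} => ℝ)
        (fun _ : Unit => {j : Fin m // j ∉ H0} → ℝ) x.1) :
    Fin m → ℝ :=
  fun j =>
    if hji : j = i then 0
    else if hj : j ∈ H0 then g ⟨Sum.inl ⟨j, hj⟩, inl_mem_nullFamIdxExcept hj hji⟩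
    else g ⟨Sum.inr (), inr_mem_nullFamIdxExcept⟩ ⟨j, hj⟩

theorem updateZeroOfNullFamExcept_nullFam {Ω : Type*} (p : Fin m → Ω → ℝ) (ω : Ω) :
    updateZeroOfNullFamExcept H0 i hi (fun x => nullFam H0 p x.1 ω) =
      Function.update (fun j => p j ω) i 0 := by
  funext j
  rcases eq_or_ne j i with rfl | hji
  · simp [updateZeroOfNullFamExcept]
  · by_cases hj : j ∈ H0 <;> simp [updateZeroOfNullFamExcept, hji, hj, nullFam]

theorem measurable_updateZeroOfNullFamExcept :
    Measurable[MeasurableSpace.pi (m := fun x : nullFamIdxExcept H0 i hi => nullFamSpace H0 x.1)]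
      (updateZeroOfNullFamExcept H0 i hi) := by
  let := MeasurableSpace.pi (m := fun x : nullFamIdxExcept H0 i hi => nullFamSpace H0 x.1)
  refine measurable_pi_lambda _ fun j => ?_
  by_cases hji : j = i
  · simp only [updateZeroOfNullFamExcept, dif_pos hji]; exact measurable_const
  by_cases hj : j ∈ H0
  · simp only [updateZeroOfNullFamExcept, hji, hj, ↓reduceDIte]
    exact @measurable_pi_apply _ _ (fun x : nullFamIdxExcept H0 i hi => nullFamSpace H0 x.1)
      ⟨Sum.inl ⟨j, hj⟩, inl_mem_nullFamIdxExcept hj hji⟩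
  · simp only [updateZeroOfNullFamExcept, hji, hj, ↓reduceDIte]
    exact (measurable_pi_apply (⟨j, hj⟩ : {j : Fin m // j ∉ H0})).comp
      (@measurable_pi_apply _ _ (fun x : nullFamIdxExcept H0 i hi => nullFamSpace H0 x.1)
        ⟨Sum.inr (), inr_mem_nullFamIdxExcept⟩)

end NullFamily

theorem indepFun_update_zero_of_iIndepFun_nullFam {Ω : Type*} [MeasurableSpace Ω]
    {μ : Measure Ω} {m : ℕ} {H0 : Finset (Fin m)} {p : Fin m → Ω → ℝ} {i : Fin m}
    (hi : i ∈ H0)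
    (hmeas : ∀ j, Measurable (p j))
    (hindep : @iIndepFun _ _ _ _ (nullFamSpace H0) (nullFam H0 p) μ) :
    IndepFun (p i) (fun ω => Function.update (fun j => p j ω) i 0) μ := by
  let := nullFamSpace H0
  have hfam : ∀ x, Measurable (nullFam H0 p x)
    | Sum.inl j => hmeas j.1
    | Sum.inr _ => measurable_pi_lambda _ fun j => hmeas j.1
  have hsplit := hindep.indepFun_finset {Sum.inl ⟨i, hi⟩} (nullFamIdxExcept H0 i hi)
    disjoint_compl_right hfam
  have h := hsplit.comp
    (measurable_pi_apply (⟨Sum.inl ⟨i, hi⟩, mem_singleton_self _⟩ :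
      {x // x ∈ ({Sum.inl ⟨i, hi⟩} : Finset ({x // x ∈ H0} ⊕ Unit))}))
    (measurable_updateZeroOfNullFamExcept H0 i hi)
  simp only [Function.comp_def, updateZeroOfNullFamExcept_nullFam] at h
  exact h

theorem stmt4_general {Ω : Type*} [MeasurableSpace Ω] {μ : Measure Ω} [IsProbabilityMeasure μ]
    {m : ℕ} (H0 : Finset (Fin m)) (p : Fin m → Ω → ℝ)
    (hmeas : ∀ i, Measurable (p i))
    (hunif : ∀ i ∈ H0,
      Measure.map (p i) μ = (volume : Measure ℝ).restrict (Set.Icc (0 : ℝ) 1))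
    (hindep : @iIndepFun _ _ _ _ (nullFamSpace H0) (nullFam H0 p) μ)
    (α : ℝ) (hα : α ∈ Set.Ioc (0 : ℝ) 1) :
    (∫ ω, ((bhRejects α (fun i => p i ω) ∩ H0).card : ℝ) /
        max ((bhRejects α (fun i => p i ω)).card : ℝ) 1 ∂μ)
      ≤ (H0.card : ℝ) / m * α ∧
    (H0.card : ℝ) / m * α ≤ α := by
  have hα0 : 0 ≤ α := hα.1.le
  set K : Fin m → Ω → ℕ := fun i ω => bhK α (Function.update (fun j => p j ω) i 0)
  have hK (i : Fin m) : Measurable (K i) :=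
    (measurable_bhK α).comp (measurable_update_left.comp (measurable_pi_lambda _ hmeas))
  refine ⟨?_, mul_le_of_le_one_left hα0 (div_le_one_of_le₀ ?_ (Nat.cast_nonneg m))⟩
  · calc _ = ∫ ω, ∑ i ∈ H0, fdpTerm (α / m) (p i ω) (K i ω) ∂μ :=
          integral_congr_ae (ae_of_all _ fun ω => card_inter_bhRejects_div_eq_sum_fdpTerm hα0 H0)
      _ = ∑ i ∈ H0, ∫ ω, fdpTerm (α / m) (p i ω) (K i ω) ∂μ :=
          integral_finsetSum H0 fun i _ => integrable_fdpTerm ((hmeas i).prodMk (hK i)) _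
      _ ≤ ∑ _i ∈ H0, α / m := sum_le_sum fun i hi =>
          integral_fdpTerm_le_of_indepFun (hmeas i) (hK i)
            ((indepFun_update_zero_of_iIndepFun_nullFam hi hmeas hindep).comp measurable_id
              (measurable_bhK α))
            (measure_le_le_ofReal_of_map_eq_uniform (hmeas i) (hunif i hi)) (by positivity)
      _ = (H0.card : ℝ) / m * α := by rw [sum_const, nsmul_eq_mul]; ring
  · exact_mod_cast (card_le_univ H0).trans_eq (Fintype.card_fin m)

/-- Benjamini–Hochberg FDR control under independence: if the null p-values are i.i.d.
uniform on `[0,1]` and independent of the non-null p-values, then the expected false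
discovery proportion of the BH procedure at level `α` is at most `(m₀/m)·α ≤ α`. -/
theorem stmt4 {Ω : Type*} [MeasurableSpace Ω] {μ : Measure Ω} [IsProbabilityMeasure μ]
    {m : ℕ} (hm : 0 < m) (H0 : Finset (Fin m)) (p : Fin m → Ω → ℝ)
    (hmeas : ∀ i, Measurable (p i))
    (hrange : ∀ i ω, p i ω ∈ Set.Icc (0 : ℝ) 1)
    (hunif : ∀ i ∈ H0,
      Measure.map (p i) μ = (volume : Measure ℝ).restrict (Set.Icc (0 : ℝ) 1))
    (hindep : @iIndepFun _ _ _ _ (nullFamSpace H0) (nullFam H0 p) μ)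
    (α : ℝ) (hα : α ∈ Set.Ioc (0 : ℝ) 1) :
    (∫ ω, ((bhRejects α (fun i => p i ω) ∩ H0).card : ℝ) /
        max ((bhRejects α (fun i => p i ω)).card : ℝ) 1 ∂μ)
      ≤ (H0.card : ℝ) / m * α ∧
    (H0.card : ℝ) / m * α ≤ α :=
  stmt4_general H0 p hmeas hunif hindep α hα
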